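/- Let k be an algebraically closed field of characteristic 2 and let n ≥ 2. Let 𝔤_> denote the subspace of sp(2n,k) consisting of those matrices whose four n×n blocks are all diagonal matrices (this is the long root subalgebra of type A₁ⁿ; it is a Lie subalgebra). Then: (1) sp(2n,k) = 𝔤_> + 𝔫, i.e. every element of sp(2n,k) is the sum of an element of 𝔤_> and an element of 𝔫; and (2) 𝔤_> ∩ 𝔪 = {x ∈ 𝔤_> : xy = yx for all y ∈ 𝔤_>}, the center of 𝔤_>. -/

import Mathlib

open Matrix

noncomputable section

/-- The matrix of the standard symplectic form: `[[0, Iₙ], [−Iₙ, 0]]`. -/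
def spJ (k : Type*) [Field k] (n : ℕ) :
    Matrix (Fin n ⊕ Fin n) (Fin n ⊕ Fin n) k :=
  Matrix.fromBlocks 0 1 (-1) 0

/-- The symplectic Lie algebra `sp(2n,k) = {x : xᵀJ + Jx = 0}`, as a subset of the
matrix Lie algebra (with bracket `⁅x,y⁆ = x*y - y*x`). -/
def spSet (k : Type*) [Field k] (n : ℕ) :
    Set (Matrix (Fin n ⊕ Fin n) (Fin n ⊕ Fin n) k) :=
  {x | xᵀ * spJ k n + spJ k n * x = 0}

/-- The symplectic group `Sp(2n,k) = {g : gᵀJg = J}`. -/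
def SpGroup (k : Type*) [Field k] (n : ℕ) :
    Set (Matrix (Fin n ⊕ Fin n) (Fin n ⊕ Fin n) k) :=
  {g | gᵀ * spJ k n * g = spJ k n}

/-- The derived subalgebra `𝔪 = ⁅sp(2n,k), sp(2n,k)⁆`, i.e. the span of all brackets of
pairs of elements of `sp(2n,k)`. -/
def spm (k : Type*) [Field k] (n : ℕ) :
    Submodule k (Matrix (Fin n ⊕ Fin n) (Fin n ⊕ Fin n) k) :=
  Submodule.span k {m | ∃ x ∈ spSet k n, ∃ y ∈ spSet k n, m = x * y - y * x}

/-- The second derived subalgebra `𝔫 = ⁅𝔪, 𝔪⁆`. -/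
def spn (k : Type*) [Field k] (n : ℕ) :
    Submodule k (Matrix (Fin n ⊕ Fin n) (Fin n ⊕ Fin n) k) :=
  Submodule.span k {m | ∃ x ∈ spm k n, ∃ y ∈ spm k n, m = x * y - y * x}

/-- The center `{x ∈ sp(2n,k) : ⁅x,y⁆ = 0 for all y ∈ sp(2n,k)}`. -/
def spCenter (k : Type*) [Field k] (n : ℕ) :
    Set (Matrix (Fin n ⊕ Fin n) (Fin n ⊕ Fin n) k) :=
  {x ∈ spSet k n | ∀ y ∈ spSet k n, x * y - y * x = 0}


/-!
In characteristic 2 the matrix `J` is the permutation matrix of `Sum.swap`, so `x ∈ sp(2n,k)` iff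
`x (swap s) t = x (swap t) s`, i.e. `Jx` is symmetric. For `x, y ∈ sp(2n,k)` the matrix `J⁅x,y⁆`
has the form `M - Mᵀ`, hence zero diagonal: every element of `𝔪` vanishes on the diagonals of the
two off-diagonal blocks.

(1) Let `e_i` be the diagonal idempotent of block index `i`; `e_i ∈ 𝔪`. Split the part of `x` outside
`𝔤_>` according to the smaller of the two block indices of an entry. Each piece `y_i` lies in
`sp(2n,k)` and satisfies `⁅e_i, y_i⁆ = y_i` (the sign disappears in characteristic 2), so `y_i ∈ 𝔪`
and then `y_i ∈ 𝔫`.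

(2) An element of `𝔤_> ∩ 𝔪` is therefore diagonal, with equal entries at `s` and `swap s`, and such
a matrix commutes with `𝔤_>`. Conversely, commuting with the elementary matrices `E_{s, swap s}`
of `𝔤_>` forces this shape, and `diag(c, c) = ⁅[[0, diag c], [0, 0]], [[0, 0], [1, 0]]⁆ ∈ 𝔪`.
-/

open Sum

section Blocks

variable {ι α : Type*}

def blockIndex : ι ⊕ ι → ι := Sum.elim id id

@[simp] lemma blockIndex_inl (i : ι) : blockIndex (inl i) = i := rfl

@[simp] lemma blockIndex_inr (i : ι) : blockIndex (inr i) = i := rfl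

@[simp] lemma blockIndex_swap (s : ι ⊕ ι) : blockIndex s.swap = blockIndex s := by
  cases s <;> rfl

lemma swap_ne_self (s : ι ⊕ ι) : s.swap ≠ s := by
  cases s <;> simp

lemma blockIndex_eq_iff {s t : ι ⊕ ι} : blockIndex s = blockIndex t ↔ t = s ∨ t = s.swap := by
  cases s <;> cases t <;> simp [eq_comm]

lemma elim_self_apply (c : ι → α) (s : ι ⊕ ι) : Sum.elim c c s = c (blockIndex s) := by
  cases s <;> rfl

def HasDiagonalBlocks [Zero α] (x : Matrix (ι ⊕ ι) (ι ⊕ ι) α) : Prop :=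
  ∀ s t, blockIndex s ≠ blockIndex t → x s t = 0

lemma hasDiagonalBlocks_iff [Zero α] {x : Matrix (ι ⊕ ι) (ι ⊕ ι) α} :
    HasDiagonalBlocks x ↔ ∀ i j : ι, i ≠ j →
      x (inl i) (inl j) = 0 ∧ x (inl i) (inr j) = 0 ∧
      x (inr i) (inl j) = 0 ∧ x (inr i) (inr j) = 0 := by
  refine ⟨fun h i j hij => ⟨h _ _ hij, h _ _ hij, h _ _ hij, h _ _ hij⟩, fun h s t hst => ?_⟩
  cases s <;> cases t
  exacts [(h _ _ hst).1, (h _ _ hst).2.1, (h _ _ hst).2.2.1, (h _ _ hst).2.2.2]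

lemma isDiag_of_hasDiagonalBlocks [Zero α] {z : Matrix (ι ⊕ ι) (ι ⊕ ι) α}
    (hz : HasDiagonalBlocks z) (hswap : ∀ s, z s.swap s = 0) : z.IsDiag := by
  intro s t hst
  by_cases h : blockIndex s = blockIndex t
  · obtain rfl | rfl := blockIndex_eq_iff.1 h
    · exact absurd rfl hst
    · simpa using hswap s.swap
  · exact hz s t h

def blockMask [Zero α] (p : ι → ι → Prop) [DecidableRel p] (x : Matrix (ι ⊕ ι) (ι ⊕ ι) α) :
    Matrix (ι ⊕ ι) (ι ⊕ ι) α :=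
  Matrix.of fun s t => if p (blockIndex s) (blockIndex t) then x s t else 0

lemma blockMask_apply [Zero α] (p : ι → ι → Prop) [DecidableRel p]
    (x : Matrix (ι ⊕ ι) (ι ⊕ ι) α) (s t : ι ⊕ ι) :
    blockMask p x s t = if p (blockIndex s) (blockIndex t) then x s t else 0 := rfl

lemma hasDiagonalBlocks_blockMask_eq [Zero α] [DecidableEq ι] (x : Matrix (ι ⊕ ι) (ι ⊕ ι) α) :
    HasDiagonalBlocks (blockMask (· = ·) x) :=
  fun _ _ h => if_neg h

lemma blockMask_eq_add_blockMask_ne [AddZeroClass α] [DecidableEq ι]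
    (x : Matrix (ι ⊕ ι) (ι ⊕ ι) α) : blockMask (· = ·) x + blockMask (· ≠ ·) x = x := by
  ext s t
  by_cases h : blockIndex s = blockIndex t <;> simp [blockMask_apply, h]

lemma sum_blockMask_min [AddCommMonoid α] [Fintype ι] [LinearOrder ι]
    (x : Matrix (ι ⊕ ι) (ι ⊕ ι) α) :
    ∑ i, blockMask (fun a b => a ≠ b ∧ min a b = i) x = blockMask (· ≠ ·) x := by
  ext s t
  by_cases h : blockIndex s = blockIndex t <;> simp [blockMask_apply, Matrix.sum_apply, h]

lemma diagonal_elim_mul_sub_mul_diagonal_elim_apply [CommRing α] [Fintype ι] [DecidableEq ι]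
    (c : ι → α) (y : Matrix (ι ⊕ ι) (ι ⊕ ι) α) (s t : ι ⊕ ι) :
    (diagonal (Sum.elim c c) * y - y * diagonal (Sum.elim c c)) s t =
      (c (blockIndex s) - c (blockIndex t)) * y s t := by
  rw [Matrix.sub_apply, diagonal_mul, mul_diagonal, elim_self_apply, elim_self_apply]
  ring

lemma diagonal_single_mul_sub_mul_blockMask_min [CommRing α] [CharP α 2] [Fintype ι]
    [LinearOrder ι] (i : ι) (x : Matrix (ι ⊕ ι) (ι ⊕ ι) α) :
    diagonal (Sum.elim (Pi.single i 1) (Pi.single i 1)) *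
        blockMask (fun a b => a ≠ b ∧ min a b = i) x -
      blockMask (fun a b => a ≠ b ∧ min a b = i) x *
        diagonal (Sum.elim (Pi.single i 1) (Pi.single i 1)) =
      blockMask (fun a b => a ≠ b ∧ min a b = i) x := by
  ext s t
  rw [diagonal_elim_mul_sub_mul_diagonal_elim_apply, blockMask_apply]
  split_ifs with h
  · obtain ⟨hne, hmin⟩ := h
    rcases min_choice (blockIndex s) (blockIndex t) with hs | ht
    · simp [← hmin, hs, hne.symm]
    · simp [← hmin, ht, hne, CharTwo.neg_eq]
  · rw [mul_zero]

end Blocks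

section Symplectic

variable {k : Type*} [Field k] [CharP k 2] {n : ℕ}

lemma spJ_mul_apply (x : Matrix (Fin n ⊕ Fin n) (Fin n ⊕ Fin n) k) (s t : Fin n ⊕ Fin n) :
    (spJ k n * x) s t = x s.swap t := by
  rw [mul_apply, Fintype.sum_sum_type]
  cases s <;> simp [spJ, one_apply, CharTwo.neg_eq]

lemma transpose_mul_spJ_apply (x : Matrix (Fin n ⊕ Fin n) (Fin n ⊕ Fin n) k)
    (s t : Fin n ⊕ Fin n) : (xᵀ * spJ k n) s t = x t.swap s := by
  rw [mul_apply, Fintype.sum_sum_type]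
  cases t <;> simp [spJ, one_apply, CharTwo.neg_eq]

lemma mem_spSet_iff_of_charTwo {x : Matrix (Fin n ⊕ Fin n) (Fin n ⊕ Fin n) k} :
    x ∈ spSet k n ↔ ∀ s t, x s.swap t = x t.swap s := by
  simp only [spSet, Set.mem_ofPred_eq, ← Matrix.ext_iff, Matrix.add_apply, Matrix.zero_apply,
    spJ_mul_apply, transpose_mul_spJ_apply, CharTwo.add_eq_zero]
  exact ⟨fun h s t => h t s, fun h s t => h t s⟩

lemma apply_swap_swap_of_mem_spSet {z : Matrix (Fin n ⊕ Fin n) (Fin n ⊕ Fin n) k}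
    (hz : z ∈ spSet k n) (s : Fin n ⊕ Fin n) : z s.swap s.swap = z s s := by
  rw [mem_spSet_iff_of_charTwo.1 hz, swap_swap]

lemma mul_sub_mul_apply_swap_self {x y : Matrix (Fin n ⊕ Fin n) (Fin n ⊕ Fin n) k}
    (hx : x ∈ spSet k n) (hy : y ∈ spSet k n) (s : Fin n ⊕ Fin n) :
    (x * y - y * x) s.swap s = 0 := by
  rw [mem_spSet_iff_of_charTwo] at hx hy
  rw [Matrix.sub_apply, sub_eq_zero, mul_apply, mul_apply]
  refine Fintype.sum_equiv (Equiv.sumComm _ _) _ _ fun u => ?_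
  rw [Equiv.sumComm_apply, hx, ← swap_swap u, hy u.swap, swap_swap, mul_comm]

lemma apply_swap_self_eq_zero_of_mem_spm {z : Matrix (Fin n ⊕ Fin n) (Fin n ⊕ Fin n) k}
    (hz : z ∈ spm k n) (s : Fin n ⊕ Fin n) : z s.swap s = 0 := by
  induction hz using Submodule.span_induction with
  | mem _ h =>
    obtain ⟨x, hx, y, hy, rfl⟩ := h
    exact mul_sub_mul_apply_swap_self hx hy s
  | zero => rfl
  | add _ _ _ _ hx hy => simp [hx, hy]
  | smul _ _ _ h => simp [h]

lemma blockMask_mem_spSet {p : Fin n → Fin n → Prop} [DecidableRel p]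
    (hp : ∀ a b, p a b ↔ p b a) {x : Matrix (Fin n ⊕ Fin n) (Fin n ⊕ Fin n) k}
    (hx : x ∈ spSet k n) : blockMask p x ∈ spSet k n := by
  rw [mem_spSet_iff_of_charTwo] at hx ⊢
  intro s t
  simp only [blockMask_apply, blockIndex_swap, hp (blockIndex t), hx s t]

lemma diagonal_elim_mem_spSet (c : Fin n → k) : diagonal (Sum.elim c c) ∈ spSet k n := by
  rw [mem_spSet_iff_of_charTwo]
  intro s t
  by_cases h : s.swap = t
  · subst h
    simp [elim_self_apply]
  · have h' : t.swap ≠ s := fun h' => h (by rw [← h', swap_swap])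
    rw [diagonal_apply_ne _ h, diagonal_apply_ne _ h']

lemma diagonal_elim_mem_spm (c : Fin n → k) : diagonal (Sum.elim c c) ∈ spm k n := by
  refine Submodule.subset_span ⟨fromBlocks 0 (diagonal c) 0 0, ?_, fromBlocks 0 0 1 0, ?_, ?_⟩
  · rw [mem_spSet_iff_of_charTwo]
    rintro (i | i) (j | j) <;> rcases eq_or_ne i j with rfl | h <;> simp [*, Ne.symm]
  · rw [mem_spSet_iff_of_charTwo]
    rintro (i | i) (j | j) <;> simp [one_apply, eq_comm]
  · rw [fromBlocks_multiply, fromBlocks_multiply, sub_eq_add_neg, fromBlocks_neg, fromBlocks_add,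
      ← fromBlocks_diagonal]
    simp [CharTwo.neg_eq]

lemma blockMask_ne_mem_spn {x : Matrix (Fin n ⊕ Fin n) (Fin n ⊕ Fin n) k}
    (hx : x ∈ spSet k n) : blockMask (· ≠ ·) x ∈ spn k n := by
  rw [← sum_blockMask_min]
  refine Submodule.sum_mem _ fun i _ => ?_
  have hy : blockMask (fun a b => a ≠ b ∧ min a b = i) x ∈ spSet k n :=
    blockMask_mem_spSet (fun a b => by rw [ne_comm, min_comm]) hx
  have hbracket := diagonal_single_mul_sub_mul_blockMask_min i x
  have hym : blockMask (fun a b => a ≠ b ∧ min a b = i) x ∈ spm k n :=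
    hbracket ▸ Submodule.subset_span ⟨_, diagonal_elim_mem_spSet _, _, hy, rfl⟩
  exact hbracket ▸ Submodule.subset_span ⟨_, diagonal_elim_mem_spm _, _, hym, rfl⟩

lemma commute_of_isDiag {y z : Matrix (Fin n ⊕ Fin n) (Fin n ⊕ Fin n) k} (hz : z ∈ spSet k n)
    (hdiag : z.IsDiag) (hy : HasDiagonalBlocks y) : z * y = y * z := by
  rw [← hdiag.diagonal_diag]
  ext s t
  rw [diagonal_mul, mul_diagonal]
  by_cases h : blockIndex s = blockIndex t
  · obtain rfl | rfl := blockIndex_eq_iff.1 h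
    · exact mul_comm _ _
    · rw [diag_apply, diag_apply, apply_swap_swap_of_mem_spSet hz, mul_comm]
  · rw [hy s t h, mul_zero, zero_mul]

lemma apply_swap_self_eq_zero_of_forall_commute {z : Matrix (Fin n ⊕ Fin n) (Fin n ⊕ Fin n) k}
    (hz : ∀ y ∈ spSet k n, HasDiagonalBlocks y → z * y = y * z) (s : Fin n ⊕ Fin n) :
    z s.swap s = 0 := by
  have hy : single s s.swap (1 : k) ∈ spSet k n := by
    rw [mem_spSet_iff_of_charTwo]
    intro a b
    have key : s = a.swap ∧ s.swap = b ↔ s = b.swap ∧ s.swap = a := by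
      constructor <;> rintro ⟨rfl, rfl⟩ <;> simp
    simp only [single_apply, key]
  have hdy : HasDiagonalBlocks (single s s.swap (1 : k)) := by
    intro a b hab
    rw [single_apply, if_neg]
    rintro ⟨rfl, rfl⟩
    exact hab (blockIndex_swap s).symm
  have := congr_fun₂ (hz _ hy hdy) s.swap s.swap
  rwa [mul_single_apply_same, single_mul_apply_of_ne _ _ _ _ _ (swap_ne_self s), mul_one] at this

lemma mem_spm_of_isDiag {z : Matrix (Fin n ⊕ Fin n) (Fin n ⊕ Fin n) k} (hz : z ∈ spSet k n)
    (hdiag : z.IsDiag) : z ∈ spm k n := by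
  convert diagonal_elim_mem_spm fun i => z (inl i) (inl i)
  conv_lhs => rw [← hdiag.diagonal_diag]
  congr 1
  ext (i | i)
  · rfl
  · exact apply_swap_swap_of_mem_spSet hz (inl i)

end Symplectic
theorem stmt7_general (k : Type*) [Field k] [CharP k 2] (n : ℕ)
    (Ggt : Set (Matrix (Fin n ⊕ Fin n) (Fin n ⊕ Fin n) k))
    (hGgt : Ggt = {x ∈ spSet k n | ∀ i j : Fin n, i ≠ j →
      x (Sum.inl i) (Sum.inl j) = 0 ∧ x (Sum.inl i) (Sum.inr j) = 0 ∧
      x (Sum.inr i) (Sum.inl j) = 0 ∧ x (Sum.inr i) (Sum.inr j) = 0}) :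
    (∀ x ∈ spSet k n, ∃ a ∈ Ggt, ∃ b ∈ spn k n, x = a + b) ∧
    {x ∈ Ggt | x ∈ spm k n} = {x ∈ Ggt | ∀ y ∈ Ggt, x * y = y * x} := by
  simp only [hGgt, ← hasDiagonalBlocks_iff]
  refine ⟨fun x hx => ⟨blockMask (· = ·) x, ⟨blockMask_mem_spSet (fun _ _ => eq_comm) hx,
    hasDiagonalBlocks_blockMask_eq x⟩, blockMask (· ≠ ·) x, blockMask_ne_mem_spn hx,
    (blockMask_eq_add_blockMask_ne x).symm⟩, ?_⟩
  ext z
  simp only [Set.mem_ofPred_eq]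
  constructor
  · rintro ⟨⟨hz, hblocks⟩, hzm⟩
    have hdiag := isDiag_of_hasDiagonalBlocks hblocks (apply_swap_self_eq_zero_of_mem_spm hzm)
    exact ⟨⟨hz, hblocks⟩, fun y ⟨_, hy⟩ => commute_of_isDiag hz hdiag hy⟩
  · rintro ⟨⟨hz, hblocks⟩, hcomm⟩
    have hdiag := isDiag_of_hasDiagonalBlocks hblocks
      (apply_swap_self_eq_zero_of_forall_commute fun y hy hdy => hcomm y ⟨hy, hdy⟩)
    exact ⟨⟨hz, hblocks⟩, mem_spm_of_isDiag hz hdiag⟩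

/-- Let `k` be algebraically closed of characteristic 2 and `n ≥ 2`, and let `𝔤_>` be the
subspace of `sp(2n,k)` of matrices whose four `n×n` blocks are all diagonal (the long
root subalgebra of type `A₁ⁿ`). Then (1) `sp(2n,k) = 𝔤_> + 𝔫`, and
(2) `𝔤_> ∩ 𝔪` is the center `{x ∈ 𝔤_> : xy = yx for all y ∈ 𝔤_>}` of `𝔤_>`. -/
theorem stmt7 (k : Type*) [Field k] [IsAlgClosed k] [CharP k 2] (n : ℕ) (hn : 2 ≤ n)
    (Ggt : Set (Matrix (Fin n ⊕ Fin n) (Fin n ⊕ Fin n) k))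
    (hGgt : Ggt = {x ∈ spSet k n | ∀ i j : Fin n, i ≠ j →
      x (Sum.inl i) (Sum.inl j) = 0 ∧ x (Sum.inl i) (Sum.inr j) = 0 ∧
      x (Sum.inr i) (Sum.inl j) = 0 ∧ x (Sum.inr i) (Sum.inr j) = 0}) :
    (∀ x ∈ spSet k n, ∃ a ∈ Ggt, ∃ b ∈ spn k n, x = a + b) ∧
    {x ∈ Ggt | x ∈ spm k n} = {x ∈ Ggt | ∀ y ∈ Ggt, x * y = y * x} :=
  stmt7_general k n Ggt hGgt
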